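/- arXiv:1208.3983 — 2 statements merged into one kernel-verified Lean document; each statement's English description precedes it below -/
import Mathlib

section
/- Let Λ₀ and Λ₁ be ℤ-lattices in the Euclidean plane E = ℝ² (discrete additive subgroups spanning E over ℝ). Let f̃ : E → E be a K-Lipschitz map for which there exists an additive group homomorphism φ : Λ₀ → Λ₁ satisfying f̃(x + λ) = f̃(x) + φ(λ) for all x ∈ E and all λ ∈ Λ₀ (so f̃ descends to a K-Lipschitz map between the flat tori T₀ = E/Λ₀ and T₁ = E/Λ₁). Suppose that the kernel of φ is the infinite cyclic subgroup ℤ·a generated by some nonzero a ∈ Λ₀, and set L = ‖a‖. Suppose moreover that every nonzero element of Λ₁ has norm at least m > 0. Then K ≥ m·L / covol(Λ₀), where covol(Λ₀) denotes the covolume of the lattice Λ₀ (the area of a fundamental domain, equal to the area of the torus T₀). -/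
/-!
Since `φ a = 0`, the lift `f` is invariant under translation by `a`, so `t ↦ ⟪f (t • a), w⟫`
is a continuous periodic function and attains its minimum, for any vector `w`. If moreover
`f (x + b) = f x + w`, comparing `f` at a minimum point `t₀ • a` with `f` at `(t₀ - s) • a + b`
gives `‖w‖ ≤ K ‖b - s • a‖`. The kernel being exactly `ℤ a` forces `a` to be primitive in `Λ₀`,
so `a` extends to a basis `(a, b)` of `Λ₀`; then `‖a‖` times the distance from `b` to the line
`ℝ a` is the covolume, and `w = φ b` is a nonzero vector of `Λ₁`, so `m ≤ ‖w‖`.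
-/

open scoped NNReal RealInnerProductSpace
open Module MeasureTheory

theorem LipschitzWith.norm_le_mul_norm_sub_smul {E F : Type*} [NormedAddCommGroup E]
    [NormedSpace ℝ E] [NormedAddCommGroup F] [InnerProductSpace ℝ F] {K : ℝ≥0} {f : E → F}
    (hf : LipschitzWith K f) {a b : E} {w : F} (ha : ∀ x, f (x + a) = f x)
    (hb : ∀ x, f (x + b) = f x + w) (s : ℝ) :
    ‖w‖ ≤ K * ‖b - s • a‖ := by
  set h : ℝ → ℝ := fun t ↦ ⟪f (t • a), w⟫
  have h_cont : Continuous h := by have := hf.continuous; fun_prop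
  have h_per : Function.Periodic h 1 := fun t ↦ by simp only [h, add_smul, one_smul, ha]
  obtain ⟨_, ⟨t₀, rfl⟩, ht₀⟩ :=
    (h_per.compact_of_continuous one_ne_zero h_cont).exists_isLeast (Set.range_nonempty h)
  set u := f ((t₀ - s) • a + b) - f (t₀ • a)
  have hu : ‖u‖ ≤ K * ‖b - s • a‖ := by
    have : (t₀ - s) • a + b - t₀ • a = b - s • a := by module
    simpa [dist_eq_norm, this] using hf.dist_le_mul ((t₀ - s) • a + b) (t₀ • a)
  have hw : ‖w‖ * ‖w‖ ≤ ‖u‖ * ‖w‖ :=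
    calc ‖w‖ * ‖w‖ ≤ ‖w‖ * ‖w‖ + (h (t₀ - s) - h t₀) := by linarith [ht₀ ⟨t₀ - s, rfl⟩]
      _ = ⟪u, w⟫ := by
        simp only [u, h, hb, inner_sub_left, inner_add_left, real_inner_self_eq_norm_sq]; ring
      _ ≤ ‖u‖ * ‖w‖ := real_inner_le_norm u w
  rcases (norm_nonneg w).eq_or_lt with hw0 | hw0
  · rw [← hw0]; positivity
  · exact (le_of_mul_le_mul_right hw hw0).trans hu

theorem AddMonoidHom.isUnit_of_zsmul_eq_of_ker {M N : Type*} [AddCommGroup M] [AddCommGroup N]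
    [IsAddTorsionFree M] [IsAddTorsionFree N] (φ : M →+ N) {a : M} (ha : a ≠ 0)
    (hker : ∀ l, φ l = 0 ↔ ∃ n : ℤ, l = n • a) {g : ℤ} {c : M} (hc : g • c = a) : IsUnit g := by
  have hg : g ≠ 0 := by rintro rfl; exact ha (by simp [← hc])
  have hφc : φ c = 0 := by
    rw [← IsAddTorsionFree.zsmul_eq_zero_iff_right hg, ← map_zsmul, hc, hker]
    exact ⟨1, (one_smul ℤ a).symm⟩
  obtain ⟨n, rfl⟩ := (hker c).1 hφc
  have : (g * n - 1) • a = 0 := by rw [sub_smul, mul_smul, hc, one_smul, sub_self]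
  rw [IsAddTorsionFree.zsmul_eq_zero_iff_left ha, sub_eq_zero] at this
  exact .of_mul_eq_one n this

theorem ZLattice.covolume_eq_abs_volumeForm {E : Type*} [NormedAddCommGroup E]
    [InnerProductSpace ℝ E] [FiniteDimensional ℝ E] [MeasurableSpace E] [BorelSpace E] {n : ℕ}
    [Fact (finrank ℝ E = n)] (o : Orientation ℝ E (Fin n)) (L : Submodule ℤ E)
    [DiscreteTopology L] [IsZLattice ℝ L] (B : Basis (Fin n) ℤ L) :
    covolume L = |o.volumeForm ((↑) ∘ B)| := by
  let b := (stdOrthonormalBasis ℝ E).reindex (finCongr (Fact.out : finrank ℝ E = n))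
  have hvol : volume.real (ZSpan.fundamentalDomain b.toBasis) = 1 := by
    rw [measureReal_def, measure_congr (ZSpan.fundamentalDomain_ae_parallelepiped _ volume),
      OrthonormalBasis.coe_toBasis, b.volume_parallelepiped, ENNReal.toReal_one]
  rw [covolume_eq_det_mul_measureReal L volume B b.toBasis, hvol, mul_one,
    o.volumeForm_robust' b]

namespace Orientation

attribute [local instance] FiniteDimensional.of_fact_finrank_eq_two

variable {E : Type*} [NormedAddCommGroup E] [InnerProductSpace ℝ E] [Fact (finrank ℝ E = 2)]
  (o : Orientation ℝ E (Fin 2))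

theorem exists_abs_areaForm_eq_norm_mul_norm_sub_smul (x y : E) :
    ∃ s : ℝ, |o.areaForm x y| = ‖x‖ * ‖y - s • x‖ := by
  rcases eq_or_ne x 0 with rfl | hx
  · exact ⟨0, by simp⟩
  refine ⟨⟪x, y⟫ / ‖x‖ ^ 2, ?_⟩
  rw [← o.abs_areaForm_of_orthogonal]
  · simp [o.areaForm_apply_self]
  · rw [inner_sub_right, inner_smul_right, real_inner_self_eq_norm_sq]
    field_simp
    ring

theorem covolume_eq_abs_areaForm [MeasurableSpace E] [BorelSpace E] (L : Submodule ℤ E)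
    [DiscreteTopology L] [IsZLattice ℝ L] (B : Basis (Fin 2) ℤ L) :
    ZLattice.covolume L = |o.areaForm (B 0) (B 1)| := by
  rw [ZLattice.covolume_eq_abs_volumeForm o, areaForm_to_volumeForm]
  congr 2
  ext i
  fin_cases i <;> rfl

theorem exists_abs_areaForm_eq_covolume [MeasurableSpace E] [BorelSpace E] (L : Submodule ℤ E)
    [DiscreteTopology L] [IsZLattice ℝ L] {a : L}
    (ha : ∀ (g : ℤ) (c : L), g • c = a → IsUnit g) :
    ∃ b : L, |o.areaForm a b| = ZLattice.covolume L := by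
  have : Module.Free ℤ L := ZLattice.module_free ℝ L
  have hrank : finrank ℤ L = 2 := (ZLattice.rank ℝ L).trans Fact.out
  let B : Basis (Fin 2) ℤ L := (Module.finBasis ℤ L).reindex (finCongr hrank)
  set p := B.repr a 0
  set q := B.repr a 1
  have ha_repr : p • B 0 + q • B 1 = a := by
    simpa only [Fin.sum_univ_two] using B.sum_repr a
  have hgcd : Int.gcd p q = 1 := by
    let c : L := (p / Int.gcd p q) • B 0 + (q / Int.gcd p q) • B 1
    have hc : (Int.gcd p q : ℤ) • c = a := by
      rw [smul_add, smul_smul, smul_smul, Int.mul_ediv_cancel' (Int.gcd_dvd_left p q),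
        Int.mul_ediv_cancel' (Int.gcd_dvd_right p q), ha_repr]
    exact Nat.isUnit_iff.1 (Int.ofNat_isUnit.1 (ha _ c hc))
  have hbezout : (p : ℝ) * Int.gcdA p q + q * Int.gcdB p q = 1 :=
    mod_cast (hgcd ▸ Int.gcd_eq_gcd_ab p q).symm
  refine ⟨Int.gcdB p q • B 0 - Int.gcdA p q • B 1, ?_⟩
  rw [o.covolume_eq_abs_areaForm L B, ← ha_repr]
  simp only [Submodule.coe_add, Submodule.coe_sub, Submodule.coe_smul, map_add, map_sub,
    map_zsmul, LinearMap.add_apply, LinearMap.smul_apply, areaForm_apply_self,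
    o.areaForm_swap (B 1 : E) (B 0), zsmul_eq_mul]
  rw [← abs_neg]
  congr 1
  linear_combination (o.areaForm (B 0) (B 1)) * hbezout

end Orientation

instance {ι : Type*} : IsAddTorsionFree (EuclideanSpace ℝ ι) := .of_module_rat _

instance {V : Type*} [AddCommGroup V] [IsAddTorsionFree V] (L : Submodule ℤ V) :
    IsAddTorsionFree L :=
  inferInstanceAs (IsAddTorsionFree L.toAddSubgroup)

instance : Fact (finrank ℝ (EuclideanSpace ℝ (Fin 2)) = 2) := ⟨finrank_euclideanSpace_fin⟩

theorem lipschitz_torus_general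
    (Λ₀ Λ₁ : Submodule ℤ (EuclideanSpace ℝ (Fin 2)))
    [DiscreteTopology Λ₀] [IsZLattice ℝ Λ₀]
    [DiscreteTopology Λ₁] [IsZLattice ℝ Λ₁]
    (K : ℝ≥0) (f : EuclideanSpace ℝ (Fin 2) → EuclideanSpace ℝ (Fin 2))
    (hf : LipschitzWith K f)
    (φ : Λ₀ →+ Λ₁)
    (hequiv : ∀ (x : EuclideanSpace ℝ (Fin 2)) (l : Λ₀), f (x + l) = f x + (φ l : EuclideanSpace ℝ (Fin 2)))
    (a : Λ₀) (ha : a ≠ 0)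
    (hker : ∀ l : Λ₀, φ l = 0 ↔ ∃ n : ℤ, l = n • a)
    (m : ℝ)
    (hmin : ∀ y : Λ₁, y ≠ 0 → m ≤ ‖(y : EuclideanSpace ℝ (Fin 2))‖) :
    m * ‖(a : EuclideanSpace ℝ (Fin 2))‖ / ZLattice.covolume Λ₀ ≤ (K : ℝ) := by
  let o := (EuclideanSpace.basisFun (Fin 2) ℝ).toBasis.orientation
  have hφa : φ a = 0 := (hker a).2 ⟨1, (one_smul ℤ a).symm⟩
  obtain ⟨b, hb⟩ := o.exists_abs_areaForm_eq_covolume Λ₀ fun _ _ hc ↦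
    φ.isUnit_of_zsmul_eq_of_ker ha hker hc
  have hcovol : 0 < ZLattice.covolume Λ₀ := ZLattice.covolume_pos Λ₀ volume
  have hφb : φ b ≠ 0 := by
    intro hφb
    obtain ⟨n, rfl⟩ := (hker b).1 hφb
    simp [o.areaForm_apply_self] at hb
    linarith
  obtain ⟨s, hs⟩ := o.exists_abs_areaForm_eq_norm_mul_norm_sub_smul a b
  have hw := hf.norm_le_mul_norm_sub_smul (a := a) (fun x ↦ by simp [hequiv x a, hφa])
    (hequiv · b) s
  rw [div_le_iff₀ hcovol, ← hb, hs, mul_left_comm, mul_comm m]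
  exact mul_le_mul_of_nonneg_left ((hmin _ hφb).trans hw) (norm_nonneg _)

/-- **Lipschitz maps between flat 2-tori.**
Let `Λ₀` and `Λ₁` be `ℤ`-lattices in the Euclidean plane, let `f` be a `K`-Lipschitz map
of the plane that is equivariant with respect to a homomorphism `φ : Λ₀ →+ Λ₁` (so that it
descends to a `K`-Lipschitz map of the corresponding flat tori).  If the kernel of `φ` is the
infinite cyclic group generated by a nonzero `a ∈ Λ₀` and every nonzero element of `Λ₁` has
norm at least `m > 0`, then `K ≥ m * ‖a‖ / covol Λ₀`. -/
theorem lipschitz_torus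
    (Λ₀ Λ₁ : Submodule ℤ (EuclideanSpace ℝ (Fin 2)))
    [DiscreteTopology Λ₀] [IsZLattice ℝ Λ₀]
    [DiscreteTopology Λ₁] [IsZLattice ℝ Λ₁]
    (K : ℝ≥0) (f : EuclideanSpace ℝ (Fin 2) → EuclideanSpace ℝ (Fin 2))
    (hf : LipschitzWith K f)
    (φ : Λ₀ →+ Λ₁)
    (hequiv : ∀ (x : EuclideanSpace ℝ (Fin 2)) (l : Λ₀), f (x + l) = f x + (φ l : EuclideanSpace ℝ (Fin 2)))
    (a : Λ₀) (ha : a ≠ 0)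
    (hker : ∀ l : Λ₀, φ l = 0 ↔ ∃ n : ℤ, l = n • a)
    (m : ℝ) (hm : 0 < m)
    (hmin : ∀ y : Λ₁, y ≠ 0 → m ≤ ‖(y : EuclideanSpace ℝ (Fin 2))‖) :
    m * ‖(a : EuclideanSpace ℝ (Fin 2))‖ / ZLattice.covolume Λ₀ ≤ (K : ℝ) :=
  lipschitz_torus_general Λ₀ Λ₁ K f hf φ hequiv a ha hker m hmin
end

section
/- Let E and F be real normed vector spaces, let Λ₀ ⊆ E and Λ₁ ⊆ F be additive subgroups, let f̃ : E → F be a map, and let φ : Λ₀ → Λ₁ be an additive homomorphism such that f̃(x + λ) = f̃(x) + φ(λ) for all x ∈ E and λ ∈ Λ₀. Suppose every nonzero element of Λ₁ has norm at least m > 0, and let b ∈ Λ₀ satisfy φ(b) ≠ 0. Then for every nonempty subset A ⊆ E whose image f̃(A) is bounded, and every n ∈ ℕ, the infimal distance between the sets f̃(A) and f̃((n·b) + A) is at least n·m − 2·diam(f̃(A)). -/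
/-! The lattice translation `n • b` is carried by `f` to the translation by `n • φ b`, a vector of
norm at least `n * m`. A set of diameter `D` and its translate by a vector `v` are at distance at
least `‖v‖ - D`, since `dist s (v + t) ≥ ‖v‖ - dist s t`. -/

open scoped Pointwise
open Metric Set

/-- The infimal distance between two subsets of a pseudometric space:
`inf {dist x y | x ∈ A, y ∈ B}`. -/
noncomputable def setInfDist {X : Type*} [PseudoMetricSpace X] (A B : Set X) : ℝ :=
  sInf {r : ℝ | ∃ x ∈ A, ∃ y ∈ B, r = dist x y}

theorem le_setInfDist {X : Type*} [PseudoMetricSpace X] {A B : Set X} (hA : A.Nonempty)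
    (hB : B.Nonempty) {r : ℝ} (h : ∀ x ∈ A, ∀ y ∈ B, r ≤ dist x y) : r ≤ setInfDist A B := by
  obtain ⟨x, hx⟩ := hA
  obtain ⟨y, hy⟩ := hB
  refine le_csInf ⟨dist x y, x, hx, y, hy, rfl⟩ ?_
  rintro _ ⟨x', hx', y', hy', rfl⟩
  exact h x' hx' y' hy'

theorem norm_sub_diam_le_setInfDist_vadd {F : Type*} [SeminormedAddCommGroup F] {S : Set F}
    (hS : Bornology.IsBounded S) (hne : S.Nonempty) (v : F) :
    ‖v‖ - diam S ≤ setInfDist S (v +ᵥ S) := by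
  refine le_setInfDist hne (hne.vadd_set (a := v)) ?_
  rintro s hs _ ⟨t, ht, rfl⟩
  calc ‖v‖ - diam S ≤ ‖v‖ - dist s t := by gcongr; exact dist_le_diam_of_mem hS hs ht
    _ = ‖v‖ - ‖s - t‖ := by rw [dist_eq_norm]
    _ ≤ ‖v - (s - t)‖ := norm_sub_norm_le _ _
    _ = dist s (v +ᵥ t) := by rw [dist_eq_norm', vadd_eq_add]; congr 1; abel

theorem image_nsmul_vadd_of_equivariant {E F : Type*} [AddCommGroup E] [AddCommGroup F]
    {Λ₀ : AddSubgroup E} {Λ₁ : AddSubgroup F} {f : E → F} {φ : Λ₀ →+ Λ₁}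
    (hequiv : ∀ (x : E) (l : Λ₀), f (x + l) = f x + (φ l : F)) (b : Λ₀) (n : ℕ) (A : Set E) :
    f '' ((n • (b : E)) +ᵥ A) = (n • (φ b : F)) +ᵥ f '' A := by
  have hpoint (x : E) : f (n • (b : E) +ᵥ x) = n • (φ b : F) +ᵥ f x := by
    rw [vadd_eq_add, vadd_eq_add, add_comm, ← AddSubgroup.coe_nsmul, hequiv, map_nsmul,
      AddSubgroup.coe_nsmul, add_comm]
  rw [← image_vadd, ← image_vadd, image_image, image_image]
  exact image_congr fun x _ => hpoint x

theorem setInfDist_image_translate_ge_general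
    {E F : Type*} [NormedAddCommGroup E] [NormedSpace ℝ E]
    [NormedAddCommGroup F] [NormedSpace ℝ F]
    (Λ₀ : AddSubgroup E) (Λ₁ : AddSubgroup F)
    (f : E → F) (φ : Λ₀ →+ Λ₁)
    (hequiv : ∀ (x : E) (l : Λ₀), f (x + l) = f x + (φ l : F))
    (m : ℝ)
    (hmin : ∀ y : Λ₁, y ≠ 0 → m ≤ ‖(y : F)‖)
    (b : Λ₀) (hb : φ b ≠ 0)
    (A : Set E) (hA : A.Nonempty)
    (hbd : Bornology.IsBounded (f '' A))
    (n : ℕ) :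
    (n : ℝ) * m - 2 * Metric.diam (f '' A)
      ≤ setInfDist (f '' A) (f '' ((n • (b : E)) +ᵥ A)) := by
  have htranslate : (n : ℝ) * m ≤ ‖n • (φ b : F)‖ := by
    rw [RCLike.norm_nsmul ℝ, nsmul_eq_mul]
    exact mul_le_mul_of_nonneg_left (hmin _ hb) n.cast_nonneg
  rw [image_nsmul_vadd_of_equivariant hequiv]
  have hdist := norm_sub_diam_le_setInfDist_vadd hbd (hA.image f) (n • (φ b : F))
  linarith [diam_nonneg (s := f '' A)]

/-- **Equivariant maps push translates far apart.**
Let `f : E → F` be equivariant with respect to a homomorphism `φ : Λ₀ →+ Λ₁` between additive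
subgroups of real normed vector spaces.  Suppose every nonzero element of `Λ₁` has norm at
least `m > 0`, and `b ∈ Λ₀` satisfies `φ b ≠ 0`.  Then for every nonempty `A ⊆ E` with
`f '' A` bounded and every `n ∈ ℕ`, the infimal distance between `f '' A` and
`f '' (n·b + A)` is at least `n·m − 2·diam (f '' A)`. -/
theorem setInfDist_image_translate_ge
    {E F : Type*} [NormedAddCommGroup E] [NormedSpace ℝ E]
    [NormedAddCommGroup F] [NormedSpace ℝ F]
    (Λ₀ : AddSubgroup E) (Λ₁ : AddSubgroup F)
    (f : E → F) (φ : Λ₀ →+ Λ₁)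
    (hequiv : ∀ (x : E) (l : Λ₀), f (x + l) = f x + (φ l : F))
    (m : ℝ) (hm : 0 < m)
    (hmin : ∀ y : Λ₁, y ≠ 0 → m ≤ ‖(y : F)‖)
    (b : Λ₀) (hb : φ b ≠ 0)
    (A : Set E) (hA : A.Nonempty)
    (hbd : Bornology.IsBounded (f '' A))
    (n : ℕ) :
    (n : ℝ) * m - 2 * Metric.diam (f '' A)
      ≤ setInfDist (f '' A) (f '' ((n • (b : E)) +ᵥ A)) :=
  setInfDist_image_translate_ge_general Λ₀ Λ₁ f φ hequiv m hmin b hb A hA hbd n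
end
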